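/- For all nonnegative integers n, the sum over all integers j of (-1)^j * C(n, (n+4j)/2) (where terms with n+4j odd are omitted, i.e. the binomial is taken only when 2 divides n+4j) equals 2^(floor(n/2)). -/
import Mathlib

/-- Binomial coefficient `C(n,k)` with integer lower index, equal to `0` for `k < 0`
(and automatically `0` for `k > n`). -/
def intChoose (n : ℕ) (k : ℤ) : ℤ :=
  if 0 ≤ k then (n.choose k.toNat : ℤ) else 0

lemma intChoose_ne_zero {n : ℕ} {k : ℤ} (h : intChoose n k ≠ 0) : 0 ≤ k ∧ k ≤ n := by
  unfold intChoose at h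
  by_cases h0 : 0 ≤ k
  · simp only [h0, if_true] at h
    refine ⟨h0, ?_⟩
    by_contra hk
    push_neg at hk
    have : n < k.toNat := by omega
    rw [Nat.choose_eq_zero_of_lt this] at h
    simp at h
  · simp [h0] at h

lemma supp_fin (n : ℕ) (c : ℤ) :
    (Function.support fun j : ℤ => ((-1 : ℤ)) ^ j.natAbs * intChoose n (c + 2 * j)).Finite := by
  apply Set.Finite.subset (Set.finite_Icc (-(c.natAbs + n : ℤ)) (c.natAbs + n))
  intro j hj
  simp only [Function.mem_support] at hj
  have h1 : intChoose n (c + 2 * j) ≠ 0 := by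
    intro h; rw [h, mul_zero] at hj; exact hj rfl
  obtain ⟨h2, h3⟩ := intChoose_ne_zero h1
  simp only [Set.mem_Icc]
  omega

lemma intChoose_symm (n : ℕ) (k : ℤ) : intChoose n k = intChoose n ((n : ℤ) - k) := by
  unfold intChoose
  by_cases h0 : 0 ≤ k
  · by_cases h1 : k ≤ n
    · rw [if_pos h0, if_pos (by omega)]
      have hk : k.toNat ≤ n := by omega
      have : ((n : ℤ) - k).toNat = n - k.toNat := by omega
      rw [this, Nat.choose_symm hk]
    · rw [if_pos h0, if_neg (by omega)]
      rw [Nat.choose_eq_zero_of_lt (by omega)]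
      simp
  · rw [if_neg h0, if_pos (by omega)]
    rw [Nat.choose_eq_zero_of_lt (by omega)]
    simp

lemma intChoose_pascal (n : ℕ) (k : ℤ) :
    intChoose (n + 1) k = intChoose n (k - 1) + intChoose n k := by
  unfold intChoose
  by_cases h0 : 0 ≤ k
  · by_cases h1 : 1 ≤ k
    · rw [if_pos h0, if_pos (by omega : (0:ℤ) ≤ k - 1), if_pos h0]
      have : k.toNat = (k - 1).toNat + 1 := by omega
      rw [this, Nat.choose_succ_succ]
      push_cast; ring
    · have : k = 0 := by omega
      subst this
      norm_num
  · rw [if_neg h0, if_neg (by omega : ¬ (0:ℤ) ≤ k - 1), if_neg h0]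
    simp

lemma sign_one_sub (j : ℤ) : ((-1 : ℤ)) ^ (1 - j).natAbs = -((-1 : ℤ)) ^ j.natAbs := by
  rcases Int.even_or_odd j with h | h
  · have h1 : Odd (1 - j) := by
      rcases h with ⟨m, rfl⟩; exact ⟨-m, by ring⟩
    rw [(Int.natAbs_even.mpr h).neg_one_pow,
        (Int.natAbs_odd.mpr h1).neg_one_pow]
  · have h1 : Even (1 - j) := by
      rcases h with ⟨m, rfl⟩; exact ⟨-m, by ring⟩
    rw [(Int.natAbs_odd.mpr h).neg_one_pow,
        (Int.natAbs_even.mpr h1).neg_one_pow]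
    ring

/-- The alternating strip sum at shifted center vanishes for even `n = 2m`. -/
lemma strip_zero (m : ℕ) :
    (∑ᶠ j : ℤ, ((-1 : ℤ)) ^ j.natAbs * intChoose (2 * m) ((m : ℤ) - 1 + 2 * j)) = 0 := by
  set f : ℤ → ℤ := fun j => ((-1 : ℤ)) ^ j.natAbs * intChoose (2 * m) ((m : ℤ) - 1 + 2 * j)
    with hf
  have key : ∀ j : ℤ, f (1 - j) = -f j := by
    intro j
    simp only [hf]
    rw [sign_one_sub j]
    have : intChoose (2 * m) ((m : ℤ) - 1 + 2 * (1 - j))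
        = intChoose (2 * m) ((m : ℤ) - 1 + 2 * j) := by
      rw [intChoose_symm (2 * m) ((m : ℤ) - 1 + 2 * (1 - j))]
      congr 1
      push_cast
      ring
    rw [this]
    ring
  have h1 : (∑ᶠ j : ℤ, f (Equiv.subLeft (1 : ℤ) j)) = ∑ᶠ j : ℤ, f j :=
    finsum_comp_equiv (Equiv.subLeft (1 : ℤ))
  have h2 : (∑ᶠ j : ℤ, f (Equiv.subLeft (1 : ℤ) j)) = -∑ᶠ j : ℤ, f j := by
    rw [show (fun j : ℤ => f (Equiv.subLeft (1 : ℤ) j)) = fun j : ℤ => -f j from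
      funext fun j => key j]
    exact finsum_neg_distrib f
  have h4 : (∑ᶠ j : ℤ, f j) = -∑ᶠ j : ℤ, f j := h1.symm.trans h2
  linarith

/-- Reflection identity for odd `n = 2m+1`. -/
lemma strip_refl (m : ℕ) :
    (∑ᶠ j : ℤ, ((-1 : ℤ)) ^ j.natAbs * intChoose (2 * m + 1) ((m : ℤ) + 1 + 2 * j)) =
    ∑ᶠ j : ℤ, ((-1 : ℤ)) ^ j.natAbs * intChoose (2 * m + 1) ((m : ℤ) + 2 * j) := by
  set f : ℤ → ℤ := fun j => ((-1 : ℤ)) ^ j.natAbs * intChoose (2 * m + 1) ((m : ℤ) + 1 + 2 * j)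
    with hf
  have h1 : (∑ᶠ j : ℤ, f (Equiv.neg ℤ j)) = ∑ᶠ j : ℤ, f j :=
    finsum_comp_equiv (Equiv.neg ℤ)
  rw [← h1]
  apply finsum_congr
  intro j
  show ((-1 : ℤ)) ^ (-j).natAbs * intChoose (2 * m + 1) ((m : ℤ) + 1 + 2 * (-j))
      = ((-1 : ℤ)) ^ j.natAbs * intChoose (2 * m + 1) ((m : ℤ) + 2 * j)
  rw [Int.natAbs_neg]
  congr 1
  rw [intChoose_symm (2 * m + 1) ((m : ℤ) + 1 + 2 * (-j))]
  congr 1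
  push_cast
  ring

lemma strip_main (n : ℕ) :
    (∑ᶠ j : ℤ, ((-1 : ℤ)) ^ j.natAbs * intChoose n ((n / 2 : ℕ) + 2 * j)) = 2 ^ (n / 2) := by
  induction n with
  | zero =>
    rw [finsum_eq_single _ (0 : ℤ)]
    · simp [intChoose]
    · intro j hj
      have : intChoose 0 ((0 / 2 : ℕ) + 2 * j) = 0 := by
        unfold intChoose
        by_cases h0 : (0 : ℤ) ≤ (0 / 2 : ℕ) + 2 * j
        · rw [if_pos h0]
          rw [Nat.choose_eq_zero_of_lt (by omega)]
          simp
        · rw [if_neg h0]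
      rw [this, mul_zero]
  | succ n ih =>
    rcases Nat.even_or_odd n with ⟨m, hm⟩ | ⟨m, hm⟩
    · -- n = 2m, prove for 2m+1
      have hn : n = 2 * m := by omega
      subst hn
      have hd1 : (2 * m + 1) / 2 = m := by omega
      have hd2 : (2 * m) / 2 = m := by omega
      rw [hd1]
      rw [hd2] at ih
      have split : ∀ j : ℤ,
          ((-1 : ℤ)) ^ j.natAbs * intChoose (2 * m + 1) ((m : ℤ) + 2 * j)
          = ((-1 : ℤ)) ^ j.natAbs * intChoose (2 * m) ((m : ℤ) - 1 + 2 * j)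
            + ((-1 : ℤ)) ^ j.natAbs * intChoose (2 * m) ((m : ℤ) + 2 * j) := by
        intro j
        rw [intChoose_pascal (2 * m) ((m : ℤ) + 2 * j)]
        have : (m : ℤ) + 2 * j - 1 = (m : ℤ) - 1 + 2 * j := by ring
        rw [this]
        ring
      calc (∑ᶠ j : ℤ, ((-1 : ℤ)) ^ j.natAbs * intChoose (2 * m + 1) ((m : ℤ) + 2 * j))
          = ∑ᶠ j : ℤ, (((-1 : ℤ)) ^ j.natAbs * intChoose (2 * m) ((m : ℤ) - 1 + 2 * j)
            + ((-1 : ℤ)) ^ j.natAbs * intChoose (2 * m) ((m : ℤ) + 2 * j)) :=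
            finsum_congr split
        _ = (∑ᶠ j : ℤ, ((-1 : ℤ)) ^ j.natAbs * intChoose (2 * m) ((m : ℤ) - 1 + 2 * j))
            + ∑ᶠ j : ℤ, ((-1 : ℤ)) ^ j.natAbs * intChoose (2 * m) ((m : ℤ) + 2 * j) :=
            finsum_add_distrib (supp_fin (2 * m) ((m : ℤ) - 1)) (supp_fin (2 * m) (m : ℤ))
        _ = 0 + 2 ^ m := by rw [strip_zero m, ih]
        _ = 2 ^ m := by ring
    · -- n = 2m+1, prove for 2m+2
      have hn : n = 2 * m + 1 := by omega
      subst hn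
      have hd1 : (2 * m + 1 + 1) / 2 = m + 1 := by omega
      have hd2 : (2 * m + 1) / 2 = m := by omega
      rw [hd1]
      rw [hd2] at ih
      have split : ∀ j : ℤ,
          ((-1 : ℤ)) ^ j.natAbs * intChoose (2 * m + 1 + 1) (((m : ℕ) + 1 : ℕ) + 2 * j)
          = ((-1 : ℤ)) ^ j.natAbs * intChoose (2 * m + 1) ((m : ℤ) + 2 * j)
            + ((-1 : ℤ)) ^ j.natAbs * intChoose (2 * m + 1) ((m : ℤ) + 1 + 2 * j) := by
        intro j
        rw [intChoose_pascal (2 * m + 1) (((m : ℕ) + 1 : ℕ) + 2 * j)]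
        have e1 : (((m : ℕ) + 1 : ℕ) : ℤ) + 2 * j - 1 = (m : ℤ) + 2 * j := by push_cast; ring
        have e2 : (((m : ℕ) + 1 : ℕ) : ℤ) + 2 * j = (m : ℤ) + 1 + 2 * j := by push_cast; ring
        rw [e1, e2]
        ring
      calc (∑ᶠ j : ℤ, ((-1 : ℤ)) ^ j.natAbs * intChoose (2 * m + 1 + 1) (((m : ℕ) + 1 : ℕ) + 2 * j))
          = ∑ᶠ j : ℤ, (((-1 : ℤ)) ^ j.natAbs * intChoose (2 * m + 1) ((m : ℤ) + 2 * j)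
            + ((-1 : ℤ)) ^ j.natAbs * intChoose (2 * m + 1) ((m : ℤ) + 1 + 2 * j)) :=
            finsum_congr split
        _ = (∑ᶠ j : ℤ, ((-1 : ℤ)) ^ j.natAbs * intChoose (2 * m + 1) ((m : ℤ) + 2 * j))
            + ∑ᶠ j : ℤ, ((-1 : ℤ)) ^ j.natAbs * intChoose (2 * m + 1) ((m : ℤ) + 1 + 2 * j) :=
            finsum_add_distrib (supp_fin (2 * m + 1) (m : ℤ)) (supp_fin (2 * m + 1) ((m : ℤ) + 1))
        _ = 2 ^ m + 2 ^ m := by rw [strip_refl m, ih]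
        _ = 2 ^ (m + 1) := by ring

/-- For all `n ≥ 0`, `∑_{j ∈ ℤ} (-1)^j C(n, ⌊(n+4j)/2⌋) = 2^⌊n/2⌋`. -/
theorem alternating_sum_mod4_strip (n : ℕ) :
    (∑ᶠ j : ℤ, (-1 : ℤ) ^ j.natAbs * intChoose n (((n : ℤ) + 4 * j) / 2)) =
      2 ^ (n / 2) := by
  have h : ∀ j : ℤ, ((n : ℤ) + 4 * j) / 2 = ((n / 2 : ℕ) : ℤ) + 2 * j := by
    intro j; omega
  calc (∑ᶠ j : ℤ, (-1 : ℤ) ^ j.natAbs * intChoose n (((n : ℤ) + 4 * j) / 2))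
      = ∑ᶠ j : ℤ, (-1 : ℤ) ^ j.natAbs * intChoose n (((n / 2 : ℕ) : ℤ) + 2 * j) := by
        apply finsum_congr; intro j; rw [h j]
    _ = 2 ^ (n / 2) := strip_main n
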